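/- Let M be a measurable space, κ a Markov kernel on M, and ψ_1,…,ψ_N : M → ℝ bounded measurable functions; write Kψ_i(x) = ∫ ψ_i(y) dκ(x)(y) and K(ψ_i²)(x) = ∫ ψ_i(y)² dκ(x)(y). On a probability space let (X_k, Y_k), k = 1,…,T, be mutually independent M×M-valued random pairs such that each pair has transition kernel κ, with ν_k the law of X_k, and suppose γ̃ ≥ 0 satisfies ∫ ψ_j(x)² (K(ψ_i²)(x) − (Kψ_i(x))²) dν_k(x) ≤ γ̃ for all i, j, k. Define the random N×N matrices K̂_T with entries (1/T) Σ_k ψ_i(Y_k) ψ_j(X_k), K_T with entries (1/T) Σ_k (Kψ_i)(X_k) ψ_j(X_k), and M̄_T with entries (1/T) Σ_k ψ_i(X_k) ψ_j(X_k). Assume M̄_T is almost surely invertible with E[‖M̄_T⁻¹‖_F²] ≤ M̃ for some constant M̃ ≥ 0, and that the relevant expectations are finite. Then E[‖K_T M̄_T⁻¹ − K̂_T M̄_T⁻¹‖_F] ≤ √(N² γ̃ M̃ / T). -/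

import Mathlib

open MeasureTheory ProbabilityTheory Matrix

noncomputable def frobeniusNormSq {m n : Type*} [Fintype m] [Fintype n]
    (A : Matrix m n ℝ) : ℝ :=
  ∑ i, ∑ j, (A i j) ^ 2

noncomputable def frobeniusNorm' {m n : Type*} [Fintype m] [Fintype n]
    (A : Matrix m n ℝ) : ℝ :=
  Real.sqrt (frobeniusNormSq A)

/-!
Entry `(i, j)` of `K_T - K̂_T` is `T⁻¹ ∑ₖ (Kψᵢ(Xₖ) - ψᵢ(Yₖ)) ψⱼ(Xₖ)`. Its summands are independent
and centred, since `Kψᵢ(x)` is the mean of `ψᵢ(Y)` under `κ(x)`, and integrating first over `κ(x)`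
shows that their second moments are the conditional variances `∫ ψⱼ² (K(ψᵢ²) - (Kψᵢ)²) dνₖ ≤ γ̃`.
Hence `E ‖K_T - K̂_T‖_F² ≤ N² γ̃ / T`. Since `‖A B‖_F ≤ ‖A‖_F ‖B‖_F`, Cauchy–Schwarz gives
`E ‖(K_T - K̂_T) M̄_T⁻¹‖_F ≤ (E ‖K_T - K̂_T‖_F²)^{1/2} (E ‖M̄_T⁻¹‖_F²)^{1/2}`.
-/

section Frobenius

variable {m n : Type*} [Fintype m] [Fintype n]

lemma frobeniusNormSq_nonneg (A : Matrix m n ℝ) : 0 ≤ frobeniusNormSq A :=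
  Finset.sum_nonneg fun _ _ => Finset.sum_nonneg fun _ _ => sq_nonneg _

lemma sq_frobeniusNorm' (A : Matrix m n ℝ) : frobeniusNorm' A ^ 2 = frobeniusNormSq A :=
  Real.sq_sqrt (frobeniusNormSq_nonneg A)

lemma frobeniusNorm'_nonneg (A : Matrix m n ℝ) : 0 ≤ frobeniusNorm' A :=
  Real.sqrt_nonneg _

lemma frobeniusNormSq_mul_le {l : Type*} [Fintype l] (A : Matrix m l ℝ) (B : Matrix l n ℝ) :
    frobeniusNormSq (A * B) ≤ frobeniusNormSq A * frobeniusNormSq B := by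
  calc frobeniusNormSq (A * B) ≤ ∑ i, ∑ j, (∑ k, A i k ^ 2) * (∑ k, B k j ^ 2) :=
        Finset.sum_le_sum fun i _ => Finset.sum_le_sum fun j _ =>
          Finset.sum_mul_sq_le_sq_mul_sq _ _ _
    _ = (∑ i, ∑ k, A i k ^ 2) * ∑ j, ∑ k, B k j ^ 2 := by rw [Finset.sum_mul_sum]
    _ = frobeniusNormSq A * frobeniusNormSq B := by
        rw [Finset.sum_comm (f := fun j k => B k j ^ 2)]
        rfl

lemma frobeniusNorm'_mul_le {l : Type*} [Fintype l] (A : Matrix m l ℝ) (B : Matrix l n ℝ) :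
    frobeniusNorm' (A * B) ≤ frobeniusNorm' A * frobeniusNorm' B := by
  rw [frobeniusNorm', frobeniusNorm', frobeniusNorm', ← Real.sqrt_mul (frobeniusNormSq_nonneg A)]
  exact Real.sqrt_le_sqrt (frobeniusNormSq_mul_le A B)

end Frobenius

section Expectation

variable {Ω : Type*} [MeasurableSpace Ω] {P : Measure Ω}

lemma integral_mul_le_sqrt_integral_sq_mul_sqrt {f g : Ω → ℝ} (hf₀ : 0 ≤ᵐ[P] f)
    (hg₀ : 0 ≤ᵐ[P] g) (hf : MemLp f 2 P) (hg : MemLp g 2 P) :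
    ∫ ω, f ω * g ω ∂P ≤ √(∫ ω, f ω ^ 2 ∂P) * √(∫ ω, g ω ^ 2 ∂P) := by
  have two : ENNReal.ofReal 2 = 2 := by norm_num
  have hf' : MemLp f (ENNReal.ofReal 2) P := by rwa [two]
  have hg' : MemLp g (ENNReal.ofReal 2) P := by rwa [two]
  have := integral_mul_le_Lp_mul_Lq_of_nonneg Real.HolderConjugate.two_two hf₀ hg₀ hf' hg'
  simp only [Real.rpow_two] at this
  rwa [Real.sqrt_eq_rpow, Real.sqrt_eq_rpow]

lemma memLp_two_frobeniusNorm' {m n : Type*} [Fintype m] [Fintype n] {A : Ω → Matrix m n ℝ}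
    (hA : Integrable (fun ω => frobeniusNormSq (A ω)) P) :
    MemLp (fun ω => frobeniusNorm' (A ω)) 2 P :=
  (memLp_two_iff_integrable_sq (Real.continuous_sqrt.comp_aestronglyMeasurable hA.1)).2
    (hA.congr (.of_forall fun ω => (sq_frobeniusNorm' (A ω)).symm))

lemma integral_frobeniusNorm'_mul_le {m l n : Type*} [Fintype m] [Fintype l] [Fintype n]
    {A : Ω → Matrix m l ℝ} {B : Ω → Matrix l n ℝ}
    (hA : Integrable (fun ω => frobeniusNormSq (A ω)) P)
    (hB : Integrable (fun ω => frobeniusNormSq (B ω)) P) :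
    ∫ ω, frobeniusNorm' (A ω * B ω) ∂P
      ≤ √(∫ ω, frobeniusNormSq (A ω) ∂P) * √(∫ ω, frobeniusNormSq (B ω) ∂P) := by
  have hA₂ := memLp_two_frobeniusNorm' hA
  have hB₂ := memLp_two_frobeniusNorm' hB
  have CS := integral_mul_le_sqrt_integral_sq_mul_sqrt (.of_forall fun _ => frobeniusNorm'_nonneg _)
    (.of_forall fun _ => frobeniusNorm'_nonneg _) hA₂ hB₂
  simp only [sq_frobeniusNorm'] at CS
  refine le_trans (integral_mono_of_nonneg (.of_forall fun _ => frobeniusNorm'_nonneg _)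
    (hA₂.integrable_mul hB₂) (.of_forall fun _ => frobeniusNorm'_mul_le _ _)) CS

lemma integral_frobeniusNormSq_le {m n : Type*} [Fintype m] [Fintype n]
    {A : Ω → Matrix m n ℝ} {c : ℝ} (hA : ∀ i j, Integrable (fun ω => A ω i j ^ 2) P)
    (hc : ∀ i j, ∫ ω, A ω i j ^ 2 ∂P ≤ c) :
    ∫ ω, frobeniusNormSq (A ω) ∂P ≤ Fintype.card m * Fintype.card n * c := by
  calc ∫ ω, frobeniusNormSq (A ω) ∂P = ∑ i, ∑ j, ∫ ω, A ω i j ^ 2 ∂P := by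
        simp only [frobeniusNormSq]
        rw [integral_finsetSum _ fun i _ => integrable_finsetSum _ fun j _ => hA i j]
        exact Finset.sum_congr rfl fun i _ => integral_finsetSum _ fun j _ => hA i j
    _ ≤ ∑ _i : m, ∑ _j : n, c := Finset.sum_le_sum fun i _ => Finset.sum_le_sum fun j _ => hc i j
    _ = Fintype.card m * Fintype.card n * c := by simp [mul_assoc]

end Expectation

section Koopman

variable {α β : Type*} [MeasurableSpace α] [MeasurableSpace β] {κ : Kernel α β} {f : β → ℝ}
  {h : α → ℝ}

noncomputable def koopmanResidual (κ : Kernel α β) (f : β → ℝ) (h : α → ℝ) (p : α × β) : ℝ :=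
  (∫ y, f y ∂κ p.1 - f p.2) * h p.1

lemma measurable_koopmanResidual (hf : Measurable f) (hh : Measurable h) :
    Measurable (koopmanResidual κ f h) :=
  ((hf.stronglyMeasurable.integral_kernel.measurable.comp measurable_fst).sub
    (hf.comp measurable_snd)).mul (hh.comp measurable_fst)

variable [IsMarkovKernel κ]

lemma norm_koopmanResidual_le {Cf Ch : ℝ} (hfC : ∀ y, ‖f y‖ ≤ Cf) (hhC : ∀ x, ‖h x‖ ≤ Ch)
    (p : α × β) : ‖koopmanResidual κ f h p‖ ≤ 2 * Cf * Ch := by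
  have hKf : ‖∫ y, f y ∂κ p.1‖ ≤ Cf := by
    simpa using norm_integral_le_of_norm_le_const (μ := κ p.1) (.of_forall hfC)
  rw [koopmanResidual, norm_mul, two_mul]
  exact mul_le_mul ((norm_sub_le _ _).trans (add_le_add hKf (hfC _))) (hhC _) (norm_nonneg _)
    (by linarith [(norm_nonneg _).trans (hfC p.2)])

variable (ν : Measure α) [IsFiniteMeasure ν]

lemma integral_koopmanResidual_compProd (hf : Measurable f) (hh : Measurable h) {Cf Ch : ℝ}
    (hfC : ∀ y, ‖f y‖ ≤ Cf) (hhC : ∀ x, ‖h x‖ ≤ Ch) :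
    ∫ p, koopmanResidual κ f h p ∂(ν ⊗ₘ κ) = 0 := by
  have hint : Integrable (koopmanResidual κ f h) (ν ⊗ₘ κ) :=
    .of_bound (measurable_koopmanResidual hf hh).aestronglyMeasurable _
      (.of_forall fun p => norm_koopmanResidual_le hfC hhC p)
  have hfint (x : α) : Integrable f (κ x) :=
    .of_bound hf.aestronglyMeasurable Cf (.of_forall hfC)
  rw [Measure.integral_compProd hint]
  refine integral_eq_zero_of_ae (.of_forall fun x => ?_)
  simp only [koopmanResidual, integral_mul_const, integral_sub (integrable_const _) (hfint x),
    integral_const, probReal_univ, one_smul, sub_self, zero_mul, Pi.zero_apply]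

lemma integral_koopmanResidual_sq_compProd (hf : Measurable f) (hh : Measurable h) {Cf Ch : ℝ}
    (hfC : ∀ y, ‖f y‖ ≤ Cf) (hhC : ∀ x, ‖h x‖ ≤ Ch) :
    ∫ p, koopmanResidual κ f h p ^ 2 ∂(ν ⊗ₘ κ)
      = ∫ x, h x ^ 2 * (∫ y, f y ^ 2 ∂κ x - (∫ y, f y ∂κ x) ^ 2) ∂ν := by
  have hint : Integrable (fun p => koopmanResidual κ f h p ^ 2) (ν ⊗ₘ κ) :=
    .of_bound ((measurable_koopmanResidual hf hh).pow_const 2).aestronglyMeasurable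
      ((2 * Cf * Ch) ^ 2) (.of_forall fun p => by
        simpa using pow_le_pow_left₀ (norm_nonneg _) (norm_koopmanResidual_le hfC hhC p) 2)
  have hfL2 (x : α) : MemLp f 2 (κ x) :=
    .of_bound hf.aestronglyMeasurable Cf (.of_forall hfC)
  rw [Measure.integral_compProd hint]
  refine integral_congr_ae (.of_forall fun x => ?_)
  have hvar := variance_eq_integral (hfL2 x).aemeasurable
  rw [variance_eq_sub (hfL2 x)] at hvar
  calc ∫ y, koopmanResidual κ f h (x, y) ^ 2 ∂κ x
      = h x ^ 2 * ∫ y, (f y - ∫ y, f y ∂κ x) ^ 2 ∂κ x := by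
        rw [← integral_const_mul]
        exact integral_congr_ae (.of_forall fun y => by simp only [koopmanResidual]; ring)
    _ = h x ^ 2 * (∫ y, f y ^ 2 ∂κ x - (∫ y, f y ∂κ x) ^ 2) := by
        rw [← hvar]
        rfl

end Koopman

section Sampling

variable {Ω α β : Type*} [MeasurableSpace Ω] [MeasurableSpace α] [MeasurableSpace β]
  {P : Measure Ω} {κ : Kernel α β}

lemma integral_comp_of_map_eq_compProd {X : Ω → α} {Y : Ω → β} (hX : Measurable X)
    (hY : Measurable Y) (hlaw : P.map (fun ω => (X ω, Y ω)) = P.map X ⊗ₘ κ) {φ : α × β → ℝ}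
    (hφ : Measurable φ) :
    ∫ ω, φ (X ω, Y ω) ∂P = ∫ p, φ p ∂(P.map X ⊗ₘ κ) := by
  rw [← hlaw, integral_map (hX.prodMk hY).aemeasurable hφ.aestronglyMeasurable]

variable [IsProbabilityMeasure P]

lemma integral_sq_sum_of_pairwise_indepFun {ι : Type*} [Fintype ι] {Z : ι → Ω → ℝ}
    (hZ : ∀ k, MemLp (Z k) 2 P) (hindep : Pairwise fun k l => Z k ⟂ᵢ[P] Z l)
    (hmean : ∀ k, ∫ ω, Z k ω ∂P = 0) :
    ∫ ω, (∑ k, Z k ω) ^ 2 ∂P = ∑ k, ∫ ω, Z k ω ^ 2 ∂P := by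
  have hsum_mean : ∫ ω, (∑ k, Z k) ω ∂P = 0 := by
    simp only [Finset.sum_apply]
    rw [integral_finsetSum _ fun k _ => (hZ k).integrable one_le_two]
    exact Finset.sum_eq_zero fun k _ => hmean k
  have hvar := IndepFun.variance_sum (s := Finset.univ) (fun k _ => hZ k)
    fun k _ l _ hkl => hindep hkl
  rw [variance_of_integral_eq_zero (memLp_finsetSum' _ fun k _ => hZ k).aemeasurable
    hsum_mean] at hvar
  simpa only [Finset.sum_apply, variance_of_integral_eq_zero (hZ _).aemeasurable (hmean _)]
    using hvar

variable [IsMarkovKernel κ] {f : β → ℝ} {h : α → ℝ}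

lemma memLp_koopmanResidual_comp {X : Ω → α} {Y : Ω → β} (hX : Measurable X) (hY : Measurable Y)
    (hf : Measurable f) (hh : Measurable h) {Cf Ch : ℝ} (hfC : ∀ y, ‖f y‖ ≤ Cf)
    (hhC : ∀ x, ‖h x‖ ≤ Ch) (p : ENNReal) :
    MemLp (fun ω => koopmanResidual κ f h (X ω, Y ω)) p P :=
  .of_bound ((measurable_koopmanResidual hf hh).comp (hX.prodMk hY)).aestronglyMeasurable _
    (.of_forall fun _ => norm_koopmanResidual_le hfC hhC _)

lemma integral_sq_mean_koopmanResidual_le {ι : Type*} [Fintype ι] [Nonempty ι]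
    {X : ι → Ω → α} {Y : ι → Ω → β} (hX : ∀ k, Measurable (X k)) (hY : ∀ k, Measurable (Y k))
    (hindep : iIndepFun (fun k ω => (X k ω, Y k ω)) P)
    (hlaw : ∀ k, P.map (fun ω => (X k ω, Y k ω)) = P.map (X k) ⊗ₘ κ)
    (hf : Measurable f) (hh : Measurable h) {Cf Ch : ℝ} (hfC : ∀ y, ‖f y‖ ≤ Cf)
    (hhC : ∀ x, ‖h x‖ ≤ Ch) {γ : ℝ}
    (hγ : ∀ k, ∫ x, h x ^ 2 * (∫ y, f y ^ 2 ∂κ x - (∫ y, f y ∂κ x) ^ 2) ∂(P.map (X k)) ≤ γ) :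
    ∫ ω, ((Fintype.card ι : ℝ)⁻¹ * ∑ k, koopmanResidual κ f h (X k ω, Y k ω)) ^ 2 ∂P
      ≤ γ / Fintype.card ι := by
  have hg := measurable_koopmanResidual (κ := κ) hf hh
  set Z : ι → Ω → ℝ := fun k ω => koopmanResidual κ f h (X k ω, Y k ω)
  have hZ (k : ι) : MemLp (Z k) 2 P := memLp_koopmanResidual_comp (hX k) (hY k) hf hh hfC hhC 2
  have hmean (k : ι) : ∫ ω, Z k ω ∂P = 0 := by
    rw [integral_comp_of_map_eq_compProd (hX k) (hY k) (hlaw k) hg]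
    exact integral_koopmanResidual_compProd _ hf hh hfC hhC
  have hsq (k : ι) : ∫ ω, Z k ω ^ 2 ∂P ≤ γ := by
    rw [integral_comp_of_map_eq_compProd (hX k) (hY k) (hlaw k) (hg.pow_const 2),
      integral_koopmanResidual_sq_compProd _ hf hh hfC hhC]
    exact hγ k
  have hcard : (0 : ℝ) < Fintype.card ι := by exact_mod_cast Fintype.card_pos
  calc ∫ ω, ((Fintype.card ι : ℝ)⁻¹ * ∑ k, Z k ω) ^ 2 ∂P
      = (Fintype.card ι : ℝ)⁻¹ ^ 2 * ∑ k, ∫ ω, Z k ω ^ 2 ∂P := by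
        simp only [mul_pow]
        rw [integral_const_mul, integral_sq_sum_of_pairwise_indepFun hZ
          (fun k l hkl => (hindep.indepFun hkl).comp hg hg) hmean]
    _ ≤ (Fintype.card ι : ℝ)⁻¹ ^ 2 * (Fintype.card ι * γ) := by
        gcongr
        simpa using Finset.sum_le_sum fun k (_ : k ∈ Finset.univ) => hsq k
    _ = γ / Fintype.card ι := by field_simp

end Sampling

theorem stmt_15_general {M : Type*} [MeasurableSpace M]
    (κ : Kernel M M) [IsMarkovKernel κ] (N : ℕ)
    (ψ : Fin N → M → ℝ)
    (hψ_meas : ∀ i, Measurable (ψ i))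
    (hψ_bdd : ∀ i, ∃ C : ℝ, ∀ x, |ψ i x| ≤ C)
    (Kψ Kψ2 : Fin N → M → ℝ)
    (hKψ : ∀ i x, Kψ i x = ∫ y, ψ i y ∂(κ x))
    (hKψ2 : ∀ i x, Kψ2 i x = ∫ y, (ψ i y) ^ 2 ∂(κ x))
    {Ω : Type*} [MeasurableSpace Ω] (P : Measure Ω) [IsProbabilityMeasure P]
    (T : ℕ) (hT : 0 < T) (X Y : Fin T → Ω → M)
    (hX_meas : ∀ k, Measurable (X k)) (hY_meas : ∀ k, Measurable (Y k))
    (hindep : iIndepFun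
      (fun k ω => (X k ω, Y k ω)) P)
    (hlaw : ∀ k, Measure.map (fun ω => (X k ω, Y k ω)) P
      = (Measure.map (X k) P) ⊗ₘ κ)
    (γ' : ℝ)
    (hbound : ∀ i j k,
      (∫ x, ψ j x ^ 2 * (Kψ2 i x - (Kψ i x) ^ 2) ∂(Measure.map (X k) P)) ≤ γ')
    (Khat KT Mbar : Ω → Matrix (Fin N) (Fin N) ℝ)
    (hKhat : ∀ ω i j, Khat ω i j = (T : ℝ)⁻¹ * ∑ k, ψ i (Y k ω) * ψ j (X k ω))
    (hKT : ∀ ω i j, KT ω i j = (T : ℝ)⁻¹ * ∑ k, Kψ i (X k ω) * ψ j (X k ω))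
    (Mt : ℝ) (hMt : 0 ≤ Mt)
    (hMbar_bound : (∫ ω, frobeniusNormSq (Mbar ω)⁻¹ ∂P) ≤ Mt)
    (hInt₁ : Integrable (fun ω => frobeniusNormSq (KT ω - Khat ω)) P)
    (hInt₂ : Integrable (fun ω => frobeniusNormSq (Mbar ω)⁻¹) P) :
    (∫ ω, frobeniusNorm' (KT ω * (Mbar ω)⁻¹ - Khat ω * (Mbar ω)⁻¹) ∂P)
      ≤ Real.sqrt ((N : ℝ) ^ 2 * γ' * Mt / T) := by
  choose C hC using hψ_bdd
  obtain rfl : Kψ = fun i x => ∫ y, ψ i y ∂(κ x) := funext₂ hKψ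
  obtain rfl : Kψ2 = fun i x => ∫ y, ψ i y ^ 2 ∂(κ x) := funext₂ hKψ2
  have : Nonempty (Fin T) := ⟨⟨0, hT⟩⟩
  have hentry (ω : Ω) (i j : Fin N) : (KT ω - Khat ω) i j
      = (T : ℝ)⁻¹ * ∑ k, koopmanResidual κ (ψ i) (ψ j) (X k ω, Y k ω) := by
    simp only [Matrix.sub_apply, hKT, hKhat, koopmanResidual, sub_mul, ← mul_sub,
      Finset.sum_sub_distrib]
  have hdiff : ∫ ω, frobeniusNormSq (KT ω - Khat ω) ∂P ≤ N ^ 2 * γ' / T := by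
    have hL2 (i j : Fin N) : MemLp (fun ω => (KT ω - Khat ω) i j) 2 P := by
      simp only [hentry]
      exact (memLp_finsetSum _ fun k _ => memLp_koopmanResidual_comp (hX_meas k) (hY_meas k)
        (hψ_meas i) (hψ_meas j) (hC i) (hC j) 2).const_mul _
    have hentry_sq (i j : Fin N) : ∫ ω, (KT ω - Khat ω) i j ^ 2 ∂P ≤ γ' / T := by
      simpa only [hentry, Fintype.card_fin] using integral_sq_mean_koopmanResidual_le hX_meas
        hY_meas hindep hlaw (hψ_meas i) (hψ_meas j) (hC i) (hC j) (hbound i j)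
    calc _ ≤ N * N * (γ' / T) := by
          simpa using integral_frobeniusNormSq_le (fun i j => (hL2 i j).integrable_sq) hentry_sq
      _ = N ^ 2 * γ' / T := by ring
  calc ∫ ω, frobeniusNorm' (KT ω * (Mbar ω)⁻¹ - Khat ω * (Mbar ω)⁻¹) ∂P
      = ∫ ω, frobeniusNorm' ((KT ω - Khat ω) * (Mbar ω)⁻¹) ∂P := by simp only [Matrix.sub_mul]
    _ ≤ √(∫ ω, frobeniusNormSq (KT ω - Khat ω) ∂P) * √(∫ ω, frobeniusNormSq (Mbar ω)⁻¹ ∂P) :=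
        integral_frobeniusNorm'_mul_le hInt₁ hInt₂
    _ ≤ √(N ^ 2 * γ' / T) * √Mt := by gcongr
    _ = √(N ^ 2 * γ' * Mt / T) := by rw [← Real.sqrt_mul' _ hMt, div_mul_eq_mul_div]

/-- Corollary 2.9 of the paper with the concrete data-driven matrices.
The expected Frobenius distance between the EDMD matrix `K̂_T M̄_T⁻¹` and the projected
Koopman matrix `K_T M̄_T⁻¹` is bounded by `√(N² γ̃ M̃ / T)`. -/
theorem stmt_15 {M : Type*} [MeasurableSpace M]
    (κ : Kernel M M) [IsMarkovKernel κ] (N : ℕ)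
    (ψ : Fin N → M → ℝ)
    (hψ_meas : ∀ i, Measurable (ψ i))
    (hψ_bdd : ∀ i, ∃ C : ℝ, ∀ x, |ψ i x| ≤ C)
    (Kψ Kψ2 : Fin N → M → ℝ)
    (hKψ : ∀ i x, Kψ i x = ∫ y, ψ i y ∂(κ x))
    (hKψ2 : ∀ i x, Kψ2 i x = ∫ y, (ψ i y) ^ 2 ∂(κ x))
    {Ω : Type*} [MeasurableSpace Ω] (P : Measure Ω) [IsProbabilityMeasure P]
    (T : ℕ) (hT : 0 < T) (X Y : Fin T → Ω → M)
    (hX_meas : ∀ k, Measurable (X k)) (hY_meas : ∀ k, Measurable (Y k))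
    (hindep : iIndepFun
      (fun k ω => (X k ω, Y k ω)) P)
    (hlaw : ∀ k, Measure.map (fun ω => (X k ω, Y k ω)) P
      = (Measure.map (X k) P) ⊗ₘ κ)
    (γ' : ℝ) (hγ' : 0 ≤ γ')
    (hbound : ∀ i j k,
      (∫ x, ψ j x ^ 2 * (Kψ2 i x - (Kψ i x) ^ 2) ∂(Measure.map (X k) P)) ≤ γ')
    (Khat KT Mbar : Ω → Matrix (Fin N) (Fin N) ℝ)
    (hKhat : ∀ ω i j, Khat ω i j = (T : ℝ)⁻¹ * ∑ k, ψ i (Y k ω) * ψ j (X k ω))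
    (hKT : ∀ ω i j, KT ω i j = (T : ℝ)⁻¹ * ∑ k, Kψ i (X k ω) * ψ j (X k ω))
    (hMbar : ∀ ω i j, Mbar ω i j = (T : ℝ)⁻¹ * ∑ k, ψ i (X k ω) * ψ j (X k ω))
    (hMbar_inv : ∀ᵐ ω ∂P, IsUnit (Mbar ω))
    (Mt : ℝ) (hMt : 0 ≤ Mt)
    (hMbar_bound : (∫ ω, frobeniusNormSq (Mbar ω)⁻¹ ∂P) ≤ Mt)
    (hInt₁ : Integrable (fun ω => frobeniusNormSq (KT ω - Khat ω)) P)
    (hInt₂ : Integrable (fun ω => frobeniusNormSq (Mbar ω)⁻¹) P)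
    (hInt₃ : Integrable
      (fun ω => frobeniusNorm' (KT ω * (Mbar ω)⁻¹ - Khat ω * (Mbar ω)⁻¹)) P) :
    (∫ ω, frobeniusNorm' (KT ω * (Mbar ω)⁻¹ - Khat ω * (Mbar ω)⁻¹) ∂P)
      ≤ Real.sqrt ((N : ℝ) ^ 2 * γ' * Mt / T) :=
  stmt_15_general κ N ψ hψ_meas hψ_bdd Kψ Kψ2 hKψ hKψ2 P T hT X Y hX_meas hY_meas hindep hlaw γ'
    hbound Khat KT Mbar hKhat hKT Mt hMt hMbar_bound hInt₁ hInt₂
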